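/- arXiv:1502.00190 — 4 statements merged into one kernel-verified Lean document; each statement's English description precedes it below -/
import Mathlib

section
/- Let ã_1, …, ã_m be unit vectors in ℝⁿ that span ℝⁿ, let p_i > 0 with Σ p_i = 1, and let P = Σ_i p_i (I − ã_i ã_iᵀ). Then the largest eigenvalue of P is strictly less than 1. -/
/-!
For a unit eigenvector `v` of `P` with eigenvalue `λ`, using `∑ pᵢ = 1`,
`λ = vᵀ P v = ‖v‖² - ∑ pᵢ ⟨aᵢ, v⟩² = 1 - ∑ pᵢ ⟨aᵢ, v⟩²`.
Since the `aᵢ` span and `v ≠ 0`, some `⟨aᵢ, v⟩` is nonzero, so the sum is positive.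
-/

open Matrix

theorem Matrix.IsHermitian.eigenvalues_lt_of_forall_norm_eq_one {𝕜 n : Type*} [RCLike 𝕜]
    [Fintype n] [DecidableEq n] {A : Matrix n n 𝕜} (hA : A.IsHermitian) {c : ℝ}
    (h : ∀ v : EuclideanSpace 𝕜 n, ‖v‖ = 1 →
      RCLike.re (star ⇑v ⬝ᵥ (A *ᵥ ⇑v)) < c)
    (j : n) : hA.eigenvalues j < c := by
  rw [hA.eigenvalues_eq]
  exact h _ (hA.eigenvectorBasis.orthonormal.1 j)

theorem Matrix.dotProduct_vecMulVec_self_mulVec {R n : Type*} [CommRing R] [Fintype n]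
    (u v : n → R) : v ⬝ᵥ (vecMulVec u u *ᵥ v) = (u ⬝ᵥ v) ^ 2 := by
  rw [vecMulVec_mulVec, op_smul_eq_smul, dotProduct_smul, dotProduct_comm, smul_eq_mul, sq]

theorem Matrix.dotProduct_sum_smul_one_sub_vecMulVec_mulVec {R ι n : Type*} [CommRing R]
    [Fintype ι] [Fintype n] [DecidableEq n] (p : ι → R) (a : ι → n → R) (v : n → R) :
    v ⬝ᵥ ((∑ i, p i • (1 - vecMulVec (a i) (a i))) *ᵥ v)
      = (∑ i, p i) * (v ⬝ᵥ v) - ∑ i, p i * (a i ⬝ᵥ v) ^ 2 := by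
  simp only [sum_mulVec, dotProduct_sum, smul_mulVec, sub_mulVec, one_mulVec, dotProduct_smul,
    dotProduct_sub, dotProduct_vecMulVec_self_mulVec, smul_eq_mul, Finset.sum_mul,
    ← Finset.sum_sub_distrib, mul_sub]

theorem exists_inner_ne_zero_of_span_eq_top {𝕜 E ι : Type*} [RCLike 𝕜]
    [NormedAddCommGroup E] [InnerProductSpace 𝕜 E] {a : ι → E}
    (hspan : Submodule.span 𝕜 (Set.range a) = ⊤) {v : E} (hv : v ≠ 0) :
    ∃ i, inner 𝕜 (a i) v ≠ 0 := by
  by_contra! h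
  have hle : Submodule.span 𝕜 (Set.range a) ≤ (𝕜 ∙ v)ᗮ :=
    Submodule.span_le.mpr <| Set.range_subset_iff.mpr fun i ↦
      Submodule.mem_orthogonal_singleton_iff_inner_left.mpr (h i)
  rw [hspan, top_le_iff, Submodule.orthogonal_eq_top_iff, Submodule.span_singleton_eq_bot] at hle
  exact hv hle

theorem mean_projection_eigenvalues_lt_one_general {n m : ℕ}
    (a : Fin m → EuclideanSpace ℝ (Fin n))
    (hspan : Submodule.span ℝ (Set.range a) = ⊤)
    (p : Fin m → ℝ) (hp : ∀ i, 0 < p i) (hsum : ∑ i, p i = 1)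
    (P : Matrix (Fin n) (Fin n) ℝ)
    (hP : P = ∑ i, p i • ((1 : Matrix (Fin n) (Fin n) ℝ) - vecMulVec (a i) (a i)))
    (hPh : P.IsHermitian) :
    ∀ j, hPh.eigenvalues j < 1 := by
  refine hPh.eigenvalues_lt_of_forall_norm_eq_one fun v hv ↦ ?_
  have hv₀ : v ≠ 0 := norm_ne_zero_iff.mp (hv ▸ one_ne_zero)
  -- `⟪x, y⟫` on `EuclideanSpace ℝ ι` unfolds to `y ⬝ᵥ x`.
  have hvv : ⇑v ⬝ᵥ ⇑v = 1 := by
    rw [← one_pow 2, ← hv, ← real_inner_self_eq_norm_sq]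
    rfl
  obtain ⟨i₀, hi₀⟩ := exists_inner_ne_zero_of_span_eq_top hspan hv₀
  replace hi₀ : ⇑(a i₀) ⬝ᵥ ⇑v ≠ 0 := by rwa [dotProduct_comm]
  have hpos : 0 < ∑ i, p i * (⇑(a i) ⬝ᵥ ⇑v) ^ 2 :=
    Finset.sum_pos' (fun i _ ↦ mul_nonneg (hp i).le (sq_nonneg _))
      ⟨i₀, Finset.mem_univ _, mul_pos (hp i₀) (by positivity)⟩
  rw [star_trivial, RCLike.re_to_real, hP, dotProduct_sum_smul_one_sub_vecMulVec_mulVec, hsum,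
    hvv]
  linarith

theorem mean_projection_eigenvalues_lt_one {n m : ℕ} (hn : 0 < n)
    (a : Fin m → EuclideanSpace ℝ (Fin n)) (ha : ∀ i, ‖a i‖ = 1)
    (hspan : Submodule.span ℝ (Set.range a) = ⊤)
    (p : Fin m → ℝ) (hp : ∀ i, 0 < p i) (hsum : ∑ i, p i = 1)
    (P : Matrix (Fin n) (Fin n) ℝ)
    (hP : P = ∑ i, p i • ((1 : Matrix (Fin n) (Fin n) ℝ) - vecMulVec (a i) (a i)))
    (hPh : P.IsHermitian) :
    ∀ j, hPh.eigenvalues j < 1 :=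
  mean_projection_eigenvalues_lt_one_general a hspan p hp hsum P hP hPh
end

section
/- With Q = Σ_i p_i (P_i ⊗ P_i) where P_i = I − ã_i ã_iᵀ for unit vectors ã_i, the matrix Q is symmetric positive semidefinite and λ_max(Q) ≤ λ_max(P) where P = Σ_i p_i P_i. -/
/-! With `Pᵢ = 1 - aᵢ aᵢᵀ`, both `Pᵢ` and `1 - Pᵢ = aᵢ aᵢᵀ` are positive semidefinite, so in the
Loewner order `Pᵢ ⊗ Pᵢ ≤ Pᵢ ⊗ 1`. Summing with the weights `pᵢ` gives `Q ≤ P ⊗ 1 ≤ λ_max(P) • 1`,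
and a Hermitian matrix lies below `c • 1` exactly when all its eigenvalues are at most `c`. -/

open Matrix Kronecker
open scoped MatrixOrder ComplexOrder

namespace Matrix

theorem sum_kronecker {ι l m n p α : Type*} [NonUnitalNonAssocSemiring α] (s : Finset ι)
    (A : ι → Matrix l m α) (B : Matrix n p α) :
    (∑ i ∈ s, A i) ⊗ₖ B = ∑ i ∈ s, A i ⊗ₖ B := by
  ext
  simp [sum_apply, Finset.sum_mul]

variable {𝕜 m n : Type*} [RCLike 𝕜] [Fintype m] [Fintype n]

theorem kronecker_le_kronecker_right {A : Matrix m m 𝕜} (hA : A.PosSemidef)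
    {B C : Matrix n n 𝕜} (h : B ≤ C) : A ⊗ₖ B ≤ A ⊗ₖ C := by
  have hsub : A ⊗ₖ C - A ⊗ₖ B = A ⊗ₖ (C - B) := by ext; simp [mul_sub]
  rw [le_iff, hsub]
  exact hA.kronecker h

theorem kronecker_le_kronecker_left {A : Matrix m m 𝕜} (hA : A.PosSemidef)
    {B C : Matrix n n 𝕜} (h : B ≤ C) : B ⊗ₖ A ≤ C ⊗ₖ A := by
  have hsub : C ⊗ₖ A - B ⊗ₖ A = (C - B) ⊗ₖ A := by ext; simp [sub_mul]
  rw [le_iff, hsub]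
  exact h.kronecker hA

theorem IsHermitian.le_smul_one_iff [DecidableEq n] {A : Matrix n n 𝕜} (hA : A.IsHermitian)
    {c : ℝ} : A ≤ c • 1 ↔ ∀ i, hA.eigenvalues i ≤ c := by
  rw [← Algebra.algebraMap_eq_smul_one, le_algebraMap_iff_spectrum_le hA.isSelfAdjoint,
    hA.spectrum_real_eq_range_eigenvalues, Set.forall_mem_range]

theorem vecMulVec_self_le_one [DecidableEq n] {a : EuclideanSpace ℝ n} (ha : ‖a‖ ≤ 1) :
    vecMulVec a a ≤ 1 := by
  refine .of_dotProduct_mulVec_nonneg (isHermitian_one.sub (by simp [IsHermitian])) fun x => ?_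
  set y : EuclideanSpace ℝ n := WithLp.toLp 2 x
  have hcs : inner ℝ a y * inner ℝ a y ≤ inner ℝ a a * inner ℝ y y :=
    real_inner_mul_inner_self_le a y
  have haa : inner ℝ a a ≤ 1 := by
    rw [real_inner_self_eq_norm_sq]
    nlinarith [norm_nonneg a]
  have hyy : 0 ≤ inner ℝ y y := real_inner_self_nonneg
  simp only [y, EuclideanSpace.inner_eq_star_dotProduct, star_trivial] at hcs haa hyy
  simp only [star_trivial, sub_mulVec, one_mulVec, vecMulVec_mulVec, dotProduct_sub,
    MulOpposite.smul_eq_mul_unop, MulOpposite.unop_op, dotProduct_smul, sub_nonneg]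
  rw [dotProduct_comm a.ofLp x]
  nlinarith

end Matrix

theorem lifted_Q_psd_le_general {n m : ℕ}
    (a : Fin m → EuclideanSpace ℝ (Fin n)) (ha : ∀ i, ‖a i‖ = 1)
    (p : Fin m → ℝ) (hp : ∀ i, 0 < p i)
    (P : Matrix (Fin n) (Fin n) ℝ)
    (hP : P = ∑ i, p i • ((1 : Matrix (Fin n) (Fin n) ℝ) - vecMulVec (a i) (a i)))
    (Q : Matrix (Fin n × Fin n) (Fin n × Fin n) ℝ)
    (hQ : Q = ∑ i, p i •
      (((1 : Matrix (Fin n) (Fin n) ℝ) - vecMulVec (a i) (a i)) ⊗ₖ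
        ((1 : Matrix (Fin n) (Fin n) ℝ) - vecMulVec (a i) (a i))))
    (hPh : P.IsHermitian) (hQh : Q.IsHermitian) :
    Q.PosSemidef ∧ (⨆ j, hQh.eigenvalues j) ≤ ⨆ i, hPh.eigenvalues i := by
  set proj := fun i => (1 : Matrix (Fin n) (Fin n) ℝ) - vecMulVec (a i) (a i)
  have proj_psd (i) : (proj i).PosSemidef := vecMulVec_self_le_one (ha i).le
  have proj_le_one (i) : proj i ≤ 1 :=
    sub_le_self _ (by simpa using (posSemidef_vecMulVec_self_star (a i).ofLp).nonneg)
  have hQ_psd : Q.PosSemidef :=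
    hQ ▸ posSemidef_sum _ fun i _ => ((proj_psd i).kronecker (proj_psd i)).smul (hp i).le
  have hP_psd : P.PosSemidef := hP ▸ posSemidef_sum _ fun i _ => (proj_psd i).smul (hp i).le
  set c := ⨆ i, hPh.eigenvalues i
  have hQP : Q ≤ P ⊗ₖ (1 : Matrix (Fin n) (Fin n) ℝ) := by
    rw [hQ, hP, sum_kronecker]
    refine Finset.sum_le_sum fun i _ => ?_
    rw [← smul_kronecker]
    exact kronecker_le_kronecker_right ((proj_psd i).smul (hp i).le) (proj_le_one i)
  have hPc : P ⊗ₖ (1 : Matrix (Fin n) (Fin n) ℝ) ≤ c • 1 := by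
    rw [← one_kronecker_one, ← smul_kronecker]
    refine kronecker_le_kronecker_left PosSemidef.one (hPh.le_smul_one_iff.mpr fun i => ?_)
    exact le_ciSup (Set.finite_range _).bddAbove i
  refine ⟨hQ_psd, Real.iSup_le (hQh.le_smul_one_iff.mp (hQP.trans hPc)) ?_⟩
  exact Real.iSup_nonneg hP_psd.eigenvalues_nonneg

theorem lifted_Q_psd_le {n m : ℕ}
    (a : Fin m → EuclideanSpace ℝ (Fin n)) (ha : ∀ i, ‖a i‖ = 1)
    (p : Fin m → ℝ) (hp : ∀ i, 0 < p i) (hsum : ∑ i, p i = 1)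
    (P : Matrix (Fin n) (Fin n) ℝ)
    (hP : P = ∑ i, p i • ((1 : Matrix (Fin n) (Fin n) ℝ) - vecMulVec (a i) (a i)))
    (Q : Matrix (Fin n × Fin n) (Fin n × Fin n) ℝ)
    (hQ : Q = ∑ i, p i •
      (((1 : Matrix (Fin n) (Fin n) ℝ) - vecMulVec (a i) (a i)) ⊗ₖ
        ((1 : Matrix (Fin n) (Fin n) ℝ) - vecMulVec (a i) (a i))))
    (hPh : P.IsHermitian) (hQh : Q.IsHermitian) :
    Q.PosSemidef ∧ (⨆ j, hQh.eigenvalues j) ≤ ⨆ i, hPh.eigenvalues i :=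
  lifted_Q_psd_le_general a ha p hp P hP Q hQ hPh hQh
end

section
/- If ã_1, …, ã_m are unit vectors spanning ℝⁿ and p_i > 0 sum to 1, then λ_max(Q) < 1 for Q = Σ_i p_i (P_i ⊗ P_i), P_i = I − ã_i ã_iᵀ. -/
/-!
Each `Pᵢ ⊗ Pᵢ` is an orthogonal projection, so for a unit eigenvector `v` of `Q` with
eigenvalue `λ` we get `λ = vᵀ Q v = 1 - ∑ᵢ pᵢ ‖v - (Pᵢ ⊗ Pᵢ) v‖²`. Hence `λ ≥ 1` forces `v` to be
fixed by every `Pᵢ ⊗ Pᵢ`. Since `ãᵢᵀ Pᵢ = 0`, the fixed vector is annihilated by `ãᵢᵀ ⊗ I`, i.e.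
every slice `v(·, k)` is orthogonal to every `ãᵢ`; as the `ãᵢ` span, `v = 0`.
-/

open Matrix Kronecker

namespace Matrix

variable {ι κ σ R : Type*}

theorem IsSymm.kronecker [CommMagma R] {A : Matrix ι ι R} {B : Matrix κ κ R}
    (hA : A.IsSymm) (hB : B.IsSymm) : (A ⊗ₖ B).IsSymm := by
  rw [IsSymm, ← kroneckerMap_transpose, hA.eq, hB.eq]

theorem isIdempotentElem_kronecker [CommSemiring R] [Fintype ι] [Fintype κ]
    {A : Matrix ι ι R} {B : Matrix κ κ R} (hA : IsIdempotentElem A) (hB : IsIdempotentElem B) :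
    IsIdempotentElem (A ⊗ₖ B) := by
  rw [IsIdempotentElem, ← mul_kronecker_mul, hA.eq, hB.eq]

theorem dotProduct_self_nonneg [Fintype ι] [CommRing R] [LinearOrder R] [IsStrictOrderedRing R]
    (v : ι → R) : 0 ≤ v ⬝ᵥ v :=
  Finset.sum_nonneg fun i _ => mul_self_nonneg (v i)

theorem IsSymm.dotProduct_sub_mulVec_self [Fintype ι] [CommRing R] {M : Matrix ι ι R}
    (hs : M.IsSymm) (hi : IsIdempotentElem M) (v : ι → R) :
    (v - M *ᵥ v) ⬝ᵥ (v - M *ᵥ v) = v ⬝ᵥ v - v ⬝ᵥ (M *ᵥ v) := by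
  have hMM : (M *ᵥ v) ⬝ᵥ (M *ᵥ v) = v ⬝ᵥ (M *ᵥ v) := by
    rw [dotProduct_mulVec, vecMul_mulVec, hs.eq, hi.eq, ← dotProduct_mulVec]
  rw [sub_dotProduct, dotProduct_sub, dotProduct_sub, hMM, dotProduct_comm (M *ᵥ v) v]
  abel

theorem mulVec_eq_self_of_le_dotProduct_sum_smul_mulVec [Fintype ι] [Fintype σ] [CommRing R]
    [LinearOrder R] [IsStrictOrderedRing R] {M : σ → Matrix ι ι R} (hs : ∀ i, (M i).IsSymm)
    (hi : ∀ i, IsIdempotentElem (M i)) {p : σ → R} (hp : ∀ i, 0 < p i) (hsum : ∑ i, p i = 1)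
    {v : ι → R} (hv : v ⬝ᵥ v ≤ v ⬝ᵥ ((∑ i, p i • M i) *ᵥ v)) (i : σ) : M i *ᵥ v = v := by
  set d : σ → R := fun i => (v - M i *ᵥ v) ⬝ᵥ (v - M i *ᵥ v)
  have hquad : v ⬝ᵥ ((∑ i, p i • M i) *ᵥ v) = v ⬝ᵥ v - ∑ i, p i * d i := by
    simp only [d, sum_mulVec, dotProduct_sum, smul_mulVec, dotProduct_smul, smul_eq_mul,
      (hs _).dotProduct_sub_mulVec_self (hi _), mul_sub, Finset.sum_sub_distrib,
      ← Finset.sum_mul, hsum, one_mul]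
    ring
  have hterms : ∀ j ∈ Finset.univ, p j * d j = 0 := by
    refine (Finset.sum_eq_zero_iff_of_nonneg fun j _ =>
      mul_nonneg (hp j).le (dotProduct_self_nonneg _)).mp (le_antisymm ?_ ?_)
    · linarith
    · exact Finset.sum_nonneg fun j _ => mul_nonneg (hp j).le (dotProduct_self_nonneg _)
  have hdi : d i = 0 := (mul_eq_zero.mp (hterms i (Finset.mem_univ i))).resolve_left (hp i).ne'
  exact (sub_eq_zero.mp (dotProduct_self_eq_zero.mp hdi)).symm

theorem lt_one_of_sum_smul_mulVec_eq_smul [Fintype ι] [Fintype σ] [CommRing R]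
    [LinearOrder R] [IsStrictOrderedRing R] {M : σ → Matrix ι ι R} (hs : ∀ i, (M i).IsSymm)
    (hi : ∀ i, IsIdempotentElem (M i)) {p : σ → R} (hp : ∀ i, 0 < p i) (hsum : ∑ i, p i = 1)
    (hfix : ∀ v : ι → R, (∀ i, M i *ᵥ v = v) → v = 0) {v : ι → R} (hv : v ≠ 0) {μ : R}
    (hμ : (∑ i, p i • M i) *ᵥ v = μ • v) : μ < 1 := by
  by_contra! hμ1
  refine hv (hfix v (mulVec_eq_self_of_le_dotProduct_sum_smul_mulVec hs hi hp hsum ?_))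
  rw [hμ, dotProduct_smul, smul_eq_mul]
  exact le_mul_of_one_le_left (dotProduct_self_nonneg v) hμ1

theorem isSymm_one_sub_vecMulVec_self [DecidableEq ι] [CommRing R] (a : ι → R) :
    (1 - vecMulVec a a).IsSymm :=
  isSymm_one.sub (transpose_vecMulVec a a)

theorem isIdempotentElem_one_sub_vecMulVec_self [Fintype ι] [DecidableEq ι] [CommRing R]
    {a : ι → R} (ha : a ⬝ᵥ a = 1) : IsIdempotentElem (1 - vecMulVec a a) := by
  refine IsIdempotentElem.one_sub ?_
  rw [IsIdempotentElem, vecMulVec_mul_vecMulVec, ha, one_smul]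

theorem vecMul_one_sub_vecMulVec_self [Fintype ι] [DecidableEq ι] [CommRing R]
    {a : ι → R} (ha : a ⬝ᵥ a = 1) : a ᵥ* (1 - vecMulVec a a) = 0 := by
  rw [vecMul_sub, vecMul_one, vecMul_vecMulVec, ha, one_smul, sub_self]

theorem kronecker_mulVec_eq_zero_of_mulVec_eq_self {l n : Type*} [Fintype ι] [Fintype κ]
    [CommSemiring R] {X : Matrix l ι R} {Y : Matrix n κ R} {P : Matrix ι ι R}
    {P' : Matrix κ κ R} (hX : X * P = 0) {v : ι × κ → R} (hv : (P ⊗ₖ P') *ᵥ v = v) :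
    (X ⊗ₖ Y) *ᵥ v = 0 := by
  rw [← hv, mulVec_mulVec, ← mul_kronecker_mul, hX, zero_kronecker, zero_mulVec]

theorem replicateRow_kronecker_one_mulVec_apply [Fintype ι] [Fintype κ] [DecidableEq κ]
    [CommSemiring R] (a : ι → R) (v : ι × κ → R) (k : κ) :
    ((replicateRow Unit a ⊗ₖ (1 : Matrix κ κ R)) *ᵥ v) ((), k) = a ⬝ᵥ fun l => v (l, k) := by
  simp [mulVec, dotProduct, one_apply, Fintype.sum_prod_type]

end Matrix

theorem eq_zero_of_forall_inner_eq_zero_of_span_eq_top {𝕜 E ι : Type*} [RCLike 𝕜]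
    [NormedAddCommGroup E] [InnerProductSpace 𝕜 E] {a : ι → E}
    (hspan : Submodule.span 𝕜 (Set.range a) = ⊤) {w : E} (hw : ∀ i, inner 𝕜 w (a i) = 0) :
    w = 0 := by
  have h : (innerSL 𝕜 w : E →ₗ[𝕜] 𝕜) = 0 := LinearMap.ext_on_range hspan hw
  exact inner_self_eq_zero.mp (LinearMap.congr_fun h w)

theorem EuclideanSpace.dotProduct_self_eq_norm_sq {ι : Type*} [Fintype ι]
    (x : EuclideanSpace ℝ ι) : ⇑x ⬝ᵥ ⇑x = ‖x‖ ^ 2 := by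
  rw [← real_inner_self_eq_norm_sq, EuclideanSpace.inner_eq_star_dotProduct, star_trivial]

theorem eq_zero_of_forall_kronecker_projection_mulVec_eq_self {ι σ : Type*} [Fintype ι]
    [DecidableEq ι] {a : σ → EuclideanSpace ℝ ι} (ha : ∀ i, ⇑(a i) ⬝ᵥ ⇑(a i) = 1)
    (hspan : Submodule.span ℝ (Set.range a) = ⊤) {v : ι × ι → ℝ}
    (hv : ∀ i, ((1 - vecMulVec (a i) (a i)) ⊗ₖ (1 - vecMulVec (a i) (a i))) *ᵥ v = v) :
    v = 0 := by
  funext ⟨l, k⟩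
  have hcol : WithLp.toLp 2 (fun l => v (l, k)) = 0 := by
    refine eq_zero_of_forall_inner_eq_zero_of_span_eq_top hspan fun i => ?_
    have hrow : replicateRow Unit ⇑(a i) * (1 - vecMulVec (a i) (a i)) = 0 := by
      rw [← replicateRow_vecMul, vecMul_one_sub_vecMulVec_self (ha i), replicateRow_zero]
    have h := congr_fun (kronecker_mulVec_eq_zero_of_mulVec_eq_self (Y := 1) hrow (hv i)) ((), k)
    rw [replicateRow_kronecker_one_mulVec_apply] at h
    simpa [EuclideanSpace.inner_eq_star_dotProduct] using h
  exact congr_fun (congrArg WithLp.ofLp hcol) l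

theorem lifted_Q_eigenvalues_lt_one {n m : ℕ}
    (a : Fin m → EuclideanSpace ℝ (Fin n)) (ha : ∀ i, ‖a i‖ = 1)
    (hspan : Submodule.span ℝ (Set.range a) = ⊤)
    (p : Fin m → ℝ) (hp : ∀ i, 0 < p i) (hsum : ∑ i, p i = 1)
    (Q : Matrix (Fin n × Fin n) (Fin n × Fin n) ℝ)
    (hQ : Q = ∑ i, p i •
      (((1 : Matrix (Fin n) (Fin n) ℝ) - vecMulVec (a i) (a i)) ⊗ₖ
        ((1 : Matrix (Fin n) (Fin n) ℝ) - vecMulVec (a i) (a i))))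
    (hQh : Q.IsHermitian) :
    ∀ j, hQh.eigenvalues j < 1 := by
  intro j
  have hunit : ∀ i, ⇑(a i) ⬝ᵥ ⇑(a i) = 1 := fun i => by
    rw [EuclideanSpace.dotProduct_self_eq_norm_sq, ha i, one_pow]
  have hvec : ⇑(hQh.eigenvectorBasis j) ≠ 0 := by
    simpa using hQh.eigenvectorBasis.orthonormal.ne_zero j
  subst hQ
  exact lt_one_of_sum_smul_mulVec_eq_smul
    (fun _ => (isSymm_one_sub_vecMulVec_self _).kronecker (isSymm_one_sub_vecMulVec_self _))
    (fun i => isIdempotentElem_kronecker (isIdempotentElem_one_sub_vecMulVec_self (hunit i))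
      (isIdempotentElem_one_sub_vecMulVec_self (hunit i)))
    hp hsum (fun _ => eq_zero_of_forall_kronecker_projection_mulVec_eq_self hunit hspan) hvec
    (hQh.mulVec_eigenvectorBasis j)
end

section
/- Let z^(k) be a random sequence in ℝⁿ with z^(k) = P_{i_k} z^(k−1) + η̃_{i_k} ã_{i_k}, where i_k is drawn i.i.d. with P(i_k = i) = p_i, ã_i are unit vectors, P_i = I − ã_i ã_iᵀ, and η̃_i are fixed scalars. Then E‖z^(k)‖² ≤ λ_max(P) · E‖z^(k−1)‖² + Σ_i p_i η̃_i², where P = Σ_i p_i P_i. -/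
/-!
Conditioned on the current error `z`, one step has mean square
`∑ i, p i * ‖P_i z + η_i a_i‖² = zᵀ P z + ∑ i, p i * η_i²`: the cross terms vanish since
`P_i a_i = 0`, and `‖P_i z‖² = zᵀ P_i z` since `P_i` is a symmetric idempotent. The Rayleigh
bound `zᵀ P z ≤ λ_max(P) ‖z‖²` and averaging over the first `k` indices, whose weights sum to
`(∑ i, p i)^k = 1`, give the claim.
-/

open Matrix

/-- One noisy Kaczmarz step on the error vector: `z ↦ P_i z + η̃_i ã_i`. -/
def kstep {n m : ℕ} (a : Fin m → EuclideanSpace ℝ (Fin n)) (η : Fin m → ℝ)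
    (i : Fin m) (z : EuclideanSpace ℝ (Fin n)) : EuclideanSpace ℝ (Fin n) :=
  WithLp.toLp 2 (((1 : Matrix (Fin n) (Fin n) ℝ) - vecMulVec (a i) (a i)).mulVec z
    + η i • (show Fin n → ℝ from a i) : Fin n → ℝ)

/-- The error vector after applying the steps indexed by `s : Fin k → Fin m`
in order, starting from `z0`. -/
def ktraj {n m : ℕ} (a : Fin m → EuclideanSpace ℝ (Fin n)) (η : Fin m → ℝ)
    (z0 : EuclideanSpace ℝ (Fin n)) {k : ℕ} (s : Fin k → Fin m) :
    EuclideanSpace ℝ (Fin n) :=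
  (List.ofFn s).foldl (fun z i => kstep a η i z) z0

/-- Expected squared error after `k` i.i.d. random steps, the expectation written
as a weighted sum over all row-index sequences of length `k`. -/
noncomputable def kMSE {n m : ℕ} (a : Fin m → EuclideanSpace ℝ (Fin n))
    (η : Fin m → ℝ) (p : Fin m → ℝ) (z0 : EuclideanSpace ℝ (Fin n)) (k : ℕ) : ℝ :=
  ∑ s : Fin k → Fin m, (∏ j, p (s j)) * ‖ktraj a η z0 s‖ ^ 2

theorem EuclideanSpace.norm_sq_eq_dotProduct {ι : Type*} [Fintype ι]
    (v : EuclideanSpace ℝ ι) : ‖v‖ ^ 2 = v.ofLp ⬝ᵥ v.ofLp := by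
  rw [← real_inner_self_eq_norm_sq, EuclideanSpace.inner_eq_star_dotProduct, star_trivial]

namespace Matrix

variable {ι : Type*} [Fintype ι]

theorem one_sub_vecMulVec_self_mulVec [DecidableEq ι] (u z : ι → ℝ) :
    (1 - vecMulVec u u) *ᵥ z = z - (u ⬝ᵥ z) • u := by
  rw [sub_mulVec, one_mulVec, vecMulVec_mulVec, op_smul_eq_smul]

theorem dotProduct_self_one_sub_vecMulVec_mulVec_add_smul [DecidableEq ι] {u : ι → ℝ}
    (hu : u ⬝ᵥ u = 1) (z : ι → ℝ) (c : ℝ) :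
    ((1 - vecMulVec u u) *ᵥ z + c • u) ⬝ᵥ ((1 - vecMulVec u u) *ᵥ z + c • u)
      = z ⬝ᵥ (1 - vecMulVec u u) *ᵥ z + c ^ 2 := by
  simp only [one_sub_vecMulVec_self_mulVec, dotProduct_add, add_dotProduct, dotProduct_sub,
    sub_dotProduct, dotProduct_smul, smul_dotProduct, smul_eq_mul, hu, dotProduct_comm u z]
  ring

open scoped MatrixOrder in
theorem IsHermitian.dotProduct_mulVec_le_iSup_eigenvalues [DecidableEq ι] {A : Matrix ι ι ℝ}
    (hA : A.IsHermitian) (x : ι → ℝ) :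
    x ⬝ᵥ A *ᵥ x ≤ (⨆ j, hA.eigenvalues j) * (x ⬝ᵥ x) := by
  -- `λ_max • 1 - A` has nonnegative spectrum, hence is positive semidefinite.
  have hle : A ≤ algebraMap ℝ _ (⨆ j, hA.eigenvalues j) := by
    refine le_algebraMap_of_spectrum_le (fun r hr => ?_) hA.isSelfAdjoint
    obtain ⟨j, rfl⟩ := hA.spectrum_real_eq_range_eigenvalues ▸ hr
    exact le_ciSup (Set.finite_range _).bddAbove j
  simpa only [star_trivial, Algebra.algebraMap_eq_smul_one, sub_mulVec, smul_mulVec, one_mulVec,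
    dotProduct_sub, dotProduct_smul, smul_eq_mul, sub_nonneg]
    using (le_iff.mp hle).dotProduct_mulVec_nonneg x

end Matrix

theorem Fintype.sum_prod_mul_eq_sum_prod_mul_snoc {α R : Type*} [Fintype α] [CommSemiring R]
    (w : α → R) {k : ℕ} (f : (Fin (k + 1) → α) → R) :
    ∑ s : Fin (k + 1) → α, (∏ j, w (s j)) * f s
      = ∑ t : Fin k → α, (∏ j, w (t j)) * ∑ i, w i * f (Fin.snoc t i) := by
  rw [← (Fin.snocEquiv fun _ => α).sum_comp, Fintype.sum_prod_type, Finset.sum_comm]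
  refine Finset.sum_congr rfl fun t _ => ?_
  simp only [Fin.snocEquiv_apply, Fin.prod_univ_castSucc, Fin.snoc_castSucc, Fin.snoc_last,
    Finset.mul_sum, mul_assoc]
  rfl

section Kaczmarz

variable {n m : ℕ} (a : Fin m → EuclideanSpace ℝ (Fin n)) (η : Fin m → ℝ)

theorem ktraj_snoc (z0 : EuclideanSpace ℝ (Fin n)) {k : ℕ} (t : Fin k → Fin m) (i : Fin m) :
    ktraj a η z0 (Fin.snoc t i) = kstep a η i (ktraj a η z0 t) := by
  rw [ktraj, List.ofFn_succ', List.concat_eq_append, List.foldl_append]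
  simp only [Fin.snoc_castSucc, Fin.snoc_last, List.foldl_cons, List.foldl_nil, ktraj]

theorem kMSE_succ (p : Fin m → ℝ) (z0 : EuclideanSpace ℝ (Fin n)) (k : ℕ) :
    kMSE a η p z0 (k + 1) = ∑ t : Fin k → Fin m,
      (∏ j, p (t j)) * ∑ i, p i * ‖kstep a η i (ktraj a η z0 t)‖ ^ 2 := by
  simp only [kMSE, Fintype.sum_prod_mul_eq_sum_prod_mul_snoc, ktraj_snoc]

theorem norm_sq_kstep (ha : ∀ i, ‖a i‖ = 1) (i : Fin m) (z : EuclideanSpace ℝ (Fin n)) :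
    ‖kstep a η i z‖ ^ 2 = z.ofLp ⬝ᵥ (1 - vecMulVec (a i) (a i)) *ᵥ z.ofLp + η i ^ 2 := by
  have hu : (a i).ofLp ⬝ᵥ (a i).ofLp = 1 := by
    rw [← EuclideanSpace.norm_sq_eq_dotProduct, ha i, one_pow]
  rw [EuclideanSpace.norm_sq_eq_dotProduct]
  exact dotProduct_self_one_sub_vecMulVec_mulVec_add_smul hu _ _

theorem sum_mul_norm_sq_kstep (ha : ∀ i, ‖a i‖ = 1) (p : Fin m → ℝ)
    (z : EuclideanSpace ℝ (Fin n)) :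
    ∑ i, p i * ‖kstep a η i z‖ ^ 2
      = z.ofLp ⬝ᵥ (∑ i, p i • (1 - vecMulVec (a i) (a i))) *ᵥ z.ofLp + ∑ i, p i * η i ^ 2 := by
  simp only [norm_sq_kstep a η ha, Matrix.sum_mulVec, dotProduct_sum, smul_mulVec,
    dotProduct_smul, smul_eq_mul, mul_add, Finset.sum_add_distrib]

end Kaczmarz

theorem one_step_mse_bound {n m : ℕ}
    (a : Fin m → EuclideanSpace ℝ (Fin n)) (ha : ∀ i, ‖a i‖ = 1)
    (p : Fin m → ℝ) (hp : ∀ i, 0 < p i) (hsum : ∑ i, p i = 1)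
    (η : Fin m → ℝ) (z0 : EuclideanSpace ℝ (Fin n))
    (P : Matrix (Fin n) (Fin n) ℝ)
    (hP : P = ∑ i, p i • ((1 : Matrix (Fin n) (Fin n) ℝ) - vecMulVec (a i) (a i)))
    (hPh : P.IsHermitian) :
    ∀ k : ℕ, kMSE a η p z0 (k + 1) ≤
      (⨆ j, hPh.eigenvalues j) * kMSE a η p z0 k + ∑ i, p i * η i ^ 2 := by
  intro k
  set L := ⨆ j, hPh.eigenvalues j
  set C := ∑ i, p i * η i ^ 2
  have step (z : EuclideanSpace ℝ (Fin n)) :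
      ∑ i, p i * ‖kstep a η i z‖ ^ 2 ≤ L * ‖z‖ ^ 2 + C := by
    rw [sum_mul_norm_sq_kstep a η ha, ← hP, EuclideanSpace.norm_sq_eq_dotProduct]
    exact add_le_add_left (hPh.dotProduct_mulVec_le_iSup_eigenvalues _) C
  have weights_sum : ∑ t : Fin k → Fin m, ∏ j, p (t j) = 1 := by
    rw [← Fintype.sum_pow, hsum, one_pow]
  calc kMSE a η p z0 (k + 1)
      ≤ ∑ t : Fin k → Fin m, (∏ j, p (t j)) * (L * ‖ktraj a η z0 t‖ ^ 2 + C) := by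
        rw [kMSE_succ]
        gcongr with t
        · exact Finset.prod_nonneg fun j _ => (hp _).le
        · exact step _
    _ = L * kMSE a η p z0 k + C * ∑ t : Fin k → Fin m, ∏ j, p (t j) := by
        simp only [kMSE, Finset.mul_sum, ← Finset.sum_add_distrib]
        exact Finset.sum_congr rfl fun t _ => by ring
    _ = L * kMSE a η p z0 k + C := by rw [weights_sum, mul_one]
end
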